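/- Let L₁,...,Lₘ be symmetric positive semidefinite n×n matrices with common kernel spanned by 𝟏 and λ₁(Lₖ) > 0, assume λ₁(L_t) is simple for all t in the probability simplex T, and let t* maximize λ₁(L_t) over T (possibly on the boundary). Then λ₁(L_{t*}) = min_{x∈X} max_{k∈{1,...,m}} xᵀLₖx/λ₁(Lₖ), and the unit eigenvector ψ₁(L_{t*}) attains this minimax. -/

import Mathlib

open Matrix Finset

noncomputable section

/-- The all-ones vector. -/
def onesVec (n : ℕ) : Fin n → ℝ := fun _ => 1

/-- Quadratic form of a matrix. -/
def quadForm {n : ℕ} (L : Matrix (Fin n) (Fin n) ℝ) (x : Fin n → ℝ) : ℝ :=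
  x ⬝ᵥ (L *ᵥ x)

/-- Mean-zero unit vectors. -/
def meanZeroUnit (n : ℕ) : Set (Fin n → ℝ) :=
  {x | onesVec n ⬝ᵥ x = 0 ∧ x ⬝ᵥ x = 1}

/-- The second smallest eigenvalue: the infimum of the Rayleigh quotient over
mean-zero unit vectors (for a PSD matrix with kernel spanned by `onesVec`). -/
def lam1 {n : ℕ} (L : Matrix (Fin n) (Fin n) ℝ) : ℝ :=
  sInf (quadForm L '' meanZeroUnit n)

/-- The probability simplex. -/
def simplex (m : ℕ) : Set (Fin m → ℝ) := {t | (∀ k, 0 ≤ t k) ∧ ∑ k, t k = 1}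

/-- The normalized combination `L_t = ∑ t_k L_k / λ₁(L_k)`. -/
def Lt {n m : ℕ} (L : Fin m → Matrix (Fin n) (Fin n) ℝ) (t : Fin m → ℝ) :
    Matrix (Fin n) (Fin n) ℝ := ∑ k, (t k / lam1 (L k)) • L k

/-- The kernel of `L` is spanned by the all-ones vector. -/
def kernelOnes {n : ℕ} (L : Matrix (Fin n) (Fin n) ℝ) : Prop :=
  ∀ x : Fin n → ℝ, L *ᵥ x = 0 ↔ ∃ c : ℝ, x = fun _ => c

/-- The second smallest eigenvalue of `M` is simple. -/
def simpleLam1 {n : ℕ} (M : Matrix (Fin n) (Fin n) ℝ) : Prop :=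
  ∀ x ∈ meanZeroUnit n, ∀ y ∈ meanZeroUnit n,
    M *ᵥ x = lam1 M • x → M *ᵥ y = lam1 M • y → y = x ∨ y = -x

/-- The worst-case normalized smoothness score over the `m` graphs. -/
def maxScore {n m : ℕ} [Nonempty (Fin m)] (L : Fin m → Matrix (Fin n) (Fin n) ℝ)
    (x : Fin n → ℝ) : ℝ :=
  Finset.univ.sup' Finset.univ_nonempty (fun k => quadForm (L k) x / lam1 (L k))

end

section Helpers
open Matrix Finset

lemma quadForm_smul' {n : ℕ} (c : ℝ) (A : Matrix (Fin n) (Fin n) ℝ) (x : Fin n → ℝ) :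
    quadForm (c • A) x = c * quadForm A x := by
  simp [quadForm, Matrix.smul_mulVec, smul_eq_mul]

lemma mulVec_sum' {n m : ℕ} (A : Fin m → Matrix (Fin n) (Fin n) ℝ) (x : Fin n → ℝ) :
    (∑ k, A k) *ᵥ x = ∑ k, A k *ᵥ x := by
  ext i
  simp [Matrix.mulVec, dotProduct, Matrix.sum_apply, Finset.sum_mul]
  rw [Finset.sum_comm]

lemma dot_sum' {n m : ℕ} (x : Fin n → ℝ) (v : Fin m → Fin n → ℝ) :
    x ⬝ᵥ (∑ k, v k) = ∑ k, x ⬝ᵥ v k := by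
  simp [dotProduct, Finset.sum_apply, Finset.mul_sum]
  rw [Finset.sum_comm]

lemma quadForm_sum' {n m : ℕ} (A : Fin m → Matrix (Fin n) (Fin n) ℝ) (x : Fin n → ℝ) :
    quadForm (∑ k, A k) x = ∑ k, quadForm (A k) x := by
  rw [quadForm, mulVec_sum', dot_sum']
  rfl

lemma quadForm_Lt {n m : ℕ} (L : Fin m → Matrix (Fin n) (Fin n) ℝ) (t : Fin m → ℝ) (x : Fin n → ℝ) :
    quadForm (Lt L t) x = ∑ k, t k * (quadForm (L k) x / lam1 (L k)) := by
  rw [Lt, quadForm_sum']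
  exact Finset.sum_congr rfl fun k _ => by rw [quadForm_smul']; ring

lemma quadForm_smul_vec {n : ℕ} (A : Matrix (Fin n) (Fin n) ℝ) (c : ℝ) (x : Fin n → ℝ) :
    quadForm A (c • x) = c^2 * quadForm A x := by
  simp [quadForm, Matrix.mulVec_smul, smul_eq_mul]; ring

lemma dot_self_nonneg' {n : ℕ} (v : Fin n → ℝ) : 0 ≤ v ⬝ᵥ v :=
  Finset.sum_nonneg fun i _ => mul_self_nonneg _

lemma dot_mulVec_symm {n : ℕ} {M : Matrix (Fin n) (Fin n) ℝ} (hM : M.IsSymm)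
    (x y : Fin n → ℝ) : x ⬝ᵥ (M *ᵥ y) = y ⬝ᵥ (M *ᵥ x) := by
  rw [Matrix.dotProduct_mulVec]
  conv_lhs => rw [← hM]
  rw [Matrix.vecMul_transpose, dotProduct_comm]

lemma quadForm_add_vec {n : ℕ} {M : Matrix (Fin n) (Fin n) ℝ} (hM : M.IsSymm)
    (a b : Fin n → ℝ) :
    quadForm M (a + b) = quadForm M a + 2 * (b ⬝ᵥ (M *ᵥ a)) + quadForm M b := by
  simp only [quadForm, Matrix.mulVec_add, dotProduct_add, add_dotProduct]
  rw [dot_mulVec_symm hM a b]; ring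

lemma quadForm_nonneg' {n : ℕ} {A : Matrix (Fin n) (Fin n) ℝ} (h : A.PosSemidef)
    (x : Fin n → ℝ) : 0 ≤ quadForm A x := by
  have h2 := h.dotProduct_mulVec_nonneg x
  have e : star x ⬝ᵥ (A *ᵥ x) = quadForm A x := by simp [quadForm]
  rwa [e] at h2

lemma dot_continuous {n : ℕ} (v : Fin n → ℝ) : Continuous (fun x : Fin n → ℝ => v ⬝ᵥ x) := by
  simp only [dotProduct]; fun_prop

lemma quadForm_continuous {n : ℕ} (A : Matrix (Fin n) (Fin n) ℝ) :
    Continuous (quadForm A) := by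
  have e : quadForm A = fun x : Fin n → ℝ => ∑ i, x i * ∑ j, A i j * x j := by
    funext x; rfl
  rw [e]; fun_prop

lemma meanZeroUnit_isClosed (n : ℕ) : IsClosed (meanZeroUnit n) := by
  have h1 : IsClosed {x : Fin n → ℝ | onesVec n ⬝ᵥ x = 0} :=
    isClosed_eq (dot_continuous _) continuous_const
  have h2 : IsClosed {x : Fin n → ℝ | x ⬝ᵥ x = 1} := by
    have : Continuous (fun x : Fin n → ℝ => x ⬝ᵥ x) := by
      simp only [dotProduct]; fun_prop
    exact isClosed_eq this continuous_const
  exact h1.inter h2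

lemma meanZeroUnit_isCompact (n : ℕ) : IsCompact (meanZeroUnit n) := by
  refine (isCompact_closedBall (0 : Fin n → ℝ) 1).of_isClosed_subset (meanZeroUnit_isClosed n) ?_
  rintro x ⟨-, hx2⟩
  rw [Metric.mem_closedBall, dist_zero_right]
  rw [pi_norm_le_iff_of_nonneg zero_le_one]
  intro i
  rw [Real.norm_eq_abs, abs_le_one_iff_mul_self_le_one]
  calc x i * x i ≤ ∑ j, x j * x j :=
        Finset.single_le_sum (fun j _ => mul_self_nonneg (x j)) (mem_univ i)
    _ = 1 := hx2

lemma lam1_le' {n : ℕ} (A : Matrix (Fin n) (Fin n) ℝ) (x : Fin n → ℝ)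
    (hx : x ∈ meanZeroUnit n) : lam1 A ≤ quadForm A x :=
  csInf_le ((meanZeroUnit_isCompact n).image (quadForm_continuous A)).bddBelow ⟨x, hx, rfl⟩

lemma quad_coeff_zero (a b : ℝ) (h : ∀ t : ℝ, 0 ≤ a * t^2 + b * t) : b = 0 := by
  by_contra hb
  have hd : (0:ℝ) < |a| + 1 := by positivity
  have hb2 : 0 < b^2 := by positivity
  have ha : a ≤ |a| := le_abs_self a
  have h2 := h (-(b / (|a| + 1)))
  have e : a * (-(b / (|a| + 1)))^2 + b * (-(b/(|a|+1))) = a*b^2/(|a|+1)^2 - b^2/(|a|+1) := by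
    field_simp
    ring
  rw [e] at h2
  have h3 : b^2/(|a|+1) ≤ a*b^2/(|a|+1)^2 := by linarith
  rw [div_le_div_iff₀ hd (by positivity)] at h3
  nlinarith [mul_le_mul_of_nonneg_right ha (le_of_lt (mul_pos hb2 hd)),
    mul_nonneg hb2.le (abs_nonneg a), hb2, hd]

lemma dot_expand {n : ℕ} (a b : Fin n → ℝ) (t : ℝ) :
    (a + t • b) ⬝ᵥ (a + t • b) = a ⬝ᵥ a + 2*t*(b ⬝ᵥ a) + t^2 * (b ⬝ᵥ b) := by
  simp [dotProduct_add, add_dotProduct, smul_eq_mul, dotProduct_comm a b]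
  ring

lemma aux_quad (δ C s ε u : ℝ) (hδ : 0 < δ) (h16 : 16*C^2*s^2 ≤ 2*δ*ε*s) :
    0 ≤ (δ/4)*u^2 - 2*C*s*u + s*ε/2 := by
  nlinarith [sq_nonneg (δ*u - 4*C*s)]

lemma aux_cs (c B C u : ℝ) (hB2 : B^2 ≤ C^2*u^2) (hc2 : c^2 ≤ 1) :
    (c*B)^2 ≤ (C*u)^2 := by
  nlinarith [sq_nonneg B]

end Helpers

set_option maxHeartbeats 2000000 in
/-- the Common Information Minimax Theorem (Theorem 2). -/
theorem common_information_minimax {n m : ℕ} [Nonempty (Fin m)]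
    (L : Fin m → Matrix (Fin n) (Fin n) ℝ)
    (hsymm : ∀ k, (L k).IsSymm) (hpsd : ∀ k, (L k).PosSemidef)
    (hker : ∀ k, kernelOnes (L k)) (hpos : ∀ k, 0 < lam1 (L k))
    (hsimple : ∀ t ∈ simplex m, simpleLam1 (Lt L t))
    (tstar : Fin m → ℝ) (htstar : tstar ∈ simplex m)
    (hmax : ∀ t ∈ simplex m, lam1 (Lt L t) ≤ lam1 (Lt L tstar))
    (ψ : Fin n → ℝ) (hψX : ψ ∈ meanZeroUnit n)
    (hψeig : Lt L tstar *ᵥ ψ = lam1 (Lt L tstar) • ψ) :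
    lam1 (Lt L tstar) = sInf (maxScore L '' meanZeroUnit n) ∧
      maxScore L ψ = sInf (maxScore L '' meanZeroUnit n) ∧
      (∀ x ∈ meanZeroUnit n, maxScore L ψ ≤ maxScore L x) := by
  classical
  have hψ0 : onesVec n ⬝ᵥ ψ = 0 := hψX.1
  have hψ1 : ψ ⬝ᵥ ψ = 1 := hψX.2
  have hts0 : ∀ k, 0 ≤ tstar k := htstar.1
  have hts1 : ∑ k, tstar k = 1 := htstar.2
  set M := Lt L tstar with hMdef
  set lam := lam1 M with hlamdef
  clear_value M lam
  have hMsymm : M.IsSymm := by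
    rw [hMdef]
    show (Lt L tstar)ᵀ = Lt L tstar
    rw [Lt, Matrix.transpose_sum]
    exact Finset.sum_congr rfl fun j _ => by rw [Matrix.transpose_smul, hsymm j]
  have hLones : ∀ j, L j *ᵥ onesVec n = 0 := fun j => (hker j (onesVec n)).mpr ⟨1, rfl⟩
  have hMones : M *ᵥ onesVec n = 0 := by
    rw [hMdef, Lt, mulVec_sum']
    refine Finset.sum_eq_zero fun j _ => ?_
    rw [Matrix.smul_mulVec, hLones j, smul_zero]
  have hMdot0 : ∀ x : Fin n → ℝ, onesVec n ⬝ᵥ (M *ᵥ x) = 0 := fun x => by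
    rw [dot_mulVec_symm hMsymm, hMones, dotProduct_zero]
  have hQψ : quadForm M ψ = lam := by
    rw [quadForm, hψeig, dotProduct_smul, hψ1, smul_eq_mul, mul_one]
  have hlamle : ∀ x ∈ meanZeroUnit n, lam ≤ quadForm M x := fun x hx => by
    rw [hlamdef]; exact lam1_le' M x hx
  have hhom : ∀ x : Fin n → ℝ, onesVec n ⬝ᵥ x = 0 → lam * (x ⬝ᵥ x) ≤ quadForm M x := by
    intro x hx0
    rcases eq_or_ne (x ⬝ᵥ x) 0 with h0 | h0
    · have hx : x = 0 := dotProduct_self_eq_zero.mp h0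
      rw [h0, hx, mul_zero]
      simp [quadForm]
    · have hpos' : 0 < x ⬝ᵥ x := (dot_self_nonneg' x).lt_of_ne (Ne.symm h0)
      set r := Real.sqrt (x ⬝ᵥ x) with hr
      have hrpos : 0 < r := Real.sqrt_pos.mpr hpos'
      have hr2 : r^2 = x ⬝ᵥ x := Real.sq_sqrt hpos'.le
      have hmem : r⁻¹ • x ∈ meanZeroUnit n := by
        constructor
        · rw [dotProduct_smul, hx0, smul_zero]
        · rw [smul_dotProduct, dotProduct_smul, smul_eq_mul, smul_eq_mul, ← hr2]
          field_simp
          try ring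
      have h1 := hlamle _ hmem
      rw [quadForm_smul_vec] at h1
      rw [← hr2]
      have h2 := mul_le_mul_of_nonneg_right h1 (sq_nonneg r)
      have e2 : r⁻¹^2 * quadForm M x * r^2 = quadForm M x := by
        field_simp
      linarith only [h2, e2]
  have hlam0 : 0 ≤ lam := by
    rw [← hQψ, hMdef, quadForm_Lt]
    exact Finset.sum_nonneg fun j _ =>
      mul_nonneg (hts0 j) (div_nonneg (quadForm_nonneg' (hpsd j) ψ) (hpos j).le)
  -- spectral gap above lam on the orthogonal complement of ψ
  have hgapEx : ∃ δ > 0, ∀ w ∈ meanZeroUnit n, ψ ⬝ᵥ w = 0 → lam + δ ≤ quadForm M w := by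
    set K := meanZeroUnit n ∩ {w | ψ ⬝ᵥ w = 0} with hKdef
    by_cases hKne : K.Nonempty
    · have hKc : IsCompact K :=
        (meanZeroUnit_isCompact n).inter_right (isClosed_eq (dot_continuous ψ) continuous_const)
      obtain ⟨w₀, hw₀K, hminOn⟩ := hKc.exists_isMinOn hKne (quadForm_continuous M).continuousOn
      rw [isMinOn_iff] at hminOn
      have hw₀ones : onesVec n ⬝ᵥ w₀ = 0 := hw₀K.1.1
      have hw₀unit : w₀ ⬝ᵥ w₀ = 1 := hw₀K.1.2
      have hw₀perp : ψ ⬝ᵥ w₀ = 0 := hw₀K.2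
      have hgt : lam < quadForm M w₀ := by
        rcases lt_or_ge lam (quadForm M w₀) with h | hle
        · exact h
        exfalso
        have heq : quadForm M w₀ = lam := le_antisymm hle (hlamle w₀ hw₀K.1)
        have hvar : ∀ v : Fin n → ℝ, onesVec n ⬝ᵥ v = 0 →
            v ⬝ᵥ (M *ᵥ w₀) = lam * (v ⬝ᵥ w₀) := by
          intro v hv0
          have hqt : ∀ t : ℝ, 0 ≤ (quadForm M v - lam * (v ⬝ᵥ v)) * t^2
              + (2*(v ⬝ᵥ (M *ᵥ w₀)) - 2*(lam * (v ⬝ᵥ w₀))) * t := by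
            intro t
            have hmz : onesVec n ⬝ᵥ (w₀ + t • v) = 0 := by
              rw [dotProduct_add, dotProduct_smul, hw₀ones, hv0, smul_zero, add_zero]
            have h1 := hhom _ hmz
            rw [quadForm_add_vec hMsymm, dot_expand, quadForm_smul_vec, hw₀unit, heq] at h1
            have e3 : (t • v) ⬝ᵥ (M *ᵥ w₀) = t * (v ⬝ᵥ (M *ᵥ w₀)) := by
              rw [smul_dotProduct, smul_eq_mul]
            rw [e3] at h1
            linarith only [h1]
          have := quad_coeff_zero _ _ hqt
          linarith only [this]
        have hMw₀mz : onesVec n ⬝ᵥ (M *ᵥ w₀ - lam • w₀) = 0 := by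
          rw [dotProduct_sub, hMdot0, dotProduct_smul, hw₀ones, smul_zero, sub_zero]
        have hvv := hvar _ hMw₀mz
        have hzero : (M *ᵥ w₀ - lam • w₀) ⬝ᵥ (M *ᵥ w₀ - lam • w₀) = 0 := by
          rw [dotProduct_sub, hvv, dotProduct_smul, smul_eq_mul, sub_self]
        have heig : M *ᵥ w₀ = lam • w₀ := by
          have h4 := dotProduct_self_eq_zero.mp hzero
          rwa [sub_eq_zero] at h4
        have hsimp := hsimple tstar htstar
        rw [← hMdef] at hsimp
        simp only [simpleLam1, ← hlamdef] at hsimp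
        have hsim := hsimp ψ hψX w₀ hw₀K.1 hψeig heig
        rcases hsim with h | h
        · rw [h, hψ1] at hw₀perp; norm_num at hw₀perp
        · rw [h, dotProduct_neg, hψ1] at hw₀perp; norm_num at hw₀perp
      exact ⟨quadForm M w₀ - lam, by linarith, fun w hw hwperp => by
        have := hminOn w ⟨hw, hwperp⟩; linarith⟩
    · exact ⟨1, one_pos, fun w hw hwperp =>
        absurd (show w ∈ K from Set.mem_inter hw hwperp) (fun hmem => hKne ⟨w, hmem⟩)⟩
  -- the key estimate: each normalized score of ψ is at most lam
  have hkey : ∀ k, quadForm (L k) ψ / lam1 (L k) ≤ lam := by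
    intro k
    by_contra hcon
    push_neg at hcon
    obtain ⟨δ, hδpos, hgap⟩ := hgapEx
    set A := (lam1 (L k))⁻¹ • L k with hAdef
    have hAq : ∀ x, quadForm A x = quadForm (L k) x / lam1 (L k) := fun x => by
      rw [hAdef, quadForm_smul']; ring
    have hAsymm : A.IsSymm := by
      rw [hAdef]
      show ((lam1 (L k))⁻¹ • L k)ᵀ = (lam1 (L k))⁻¹ • L k
      rw [Matrix.transpose_smul, hsymm k]
    set ε := quadForm A ψ - lam with hεdef
    have hεpos : 0 < ε := by rw [hεdef, hAq]; linarith only [hcon]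
    have hAψ : quadForm A ψ = lam + ε := by rw [hεdef]; ring
    set C := Real.sqrt ((A *ᵥ ψ) ⬝ᵥ (A *ᵥ ψ)) with hCdef
    have hC0 : 0 ≤ C := Real.sqrt_nonneg _
    have hC2 : C^2 = (A *ᵥ ψ) ⬝ᵥ (A *ᵥ ψ) := Real.sq_sqrt (dot_self_nonneg' _)
    clear_value A ε C
    have hden1 : 0 < 4*(lam + ε + 1) := by nlinarith [hlam0, hεpos]
    have hden2 : 0 < 8*(C^2+1) := by positivity
    set s := min (1/2 : ℝ) (min (δ/(4*(lam + ε + 1))) (ε*δ/(8*(C^2+1)))) with hsdef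
    clear_value s
    have hspos : 0 < s := by
      rw [hsdef]
      exact lt_min (by norm_num) (lt_min (div_pos hδpos hden1) (div_pos (mul_pos hεpos hδpos) hden2))
    have hs1 : s ≤ 1/2 := by rw [hsdef]; exact min_le_left _ _
    have hs2 : s ≤ δ/(4*(lam+ε+1)) := by
      rw [hsdef]; exact (min_le_right _ _).trans (min_le_left _ _)
    have hs3 : s ≤ ε*δ/(8*(C^2+1)) := by
      rw [hsdef]; exact (min_le_right _ _).trans (min_le_right _ _)
    have h1s : (0:ℝ) ≤ 1 - s := by linarith
    have hcoef : δ/4 ≤ (1-s)*δ - s*(lam+ε) := by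
      have h1 : s*(4*(lam+ε+1)) ≤ δ := by
        rw [← le_div_iff₀ (by nlinarith [hlam0, hεpos] : (0:ℝ) < 4*(lam+ε+1))]
        exact hs2
      have hsd : s*δ ≤ δ/2 := by
        have h5 := mul_le_mul_of_nonneg_right hs1 hδpos.le
        linarith only [h5]
      linarith only [h1, hsd, hspos]
    have hCs : 8*C^2*s ≤ ε*δ := by
      have h1 : s*(8*(C^2+1)) ≤ ε*δ := by
        rw [← le_div_iff₀ hden2]
        exact hs3
      linarith only [h1, hspos]
    have h16 : 16*C^2*s^2 ≤ 2*δ*ε*s := by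
      have h5 := mul_le_mul_of_nonneg_right hCs hspos.le
      linarith only [h5]
    have hquad : ∀ u : ℝ, 0 ≤ (δ/4)*u^2 - 2*C*s*u + s*ε/2 := fun u => aux_quad δ C s ε u hδpos h16
    set ts : Fin m → ℝ := fun j => (1-s) * tstar j + s * (if j = k then 1 else 0) with htsdef
    have htsS : ts ∈ simplex m := by
      constructor
      · intro j
        simp only [htsdef]
        split
        · have h5 := mul_nonneg (by linarith only [hs1] : (0:ℝ) ≤ 1-s) (hts0 j)
          linarith only [h5, hspos]
        · have h5 := mul_nonneg (by linarith only [hs1] : (0:ℝ) ≤ 1-s) (hts0 j)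
          linarith only [h5, hspos]
      · simp only [htsdef]
        rw [Finset.sum_add_distrib, ← Finset.mul_sum, ← Finset.mul_sum, hts1,
          Finset.sum_ite_eq' univ k (fun _ => (1:ℝ))]
        simp
    have hbound : ∀ x ∈ meanZeroUnit n, lam + s*ε/2 ≤ quadForm (Lt L ts) x := by
      intro x hx
      have hx0 : onesVec n ⬝ᵥ x = 0 := hx.1
      have hx1 : x ⬝ᵥ x = 1 := hx.2
      set c := ψ ⬝ᵥ x with hcdef
      set w := x - c • ψ with hwdef
      have hxd : x = c • ψ + w := by rw [hwdef]; abel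
      have hw0 : onesVec n ⬝ᵥ w = 0 := by
        rw [hwdef, dotProduct_sub, dotProduct_smul, hx0, hψ0, smul_zero, sub_zero]
      have hψw : ψ ⬝ᵥ w = 0 := by
        rw [hwdef, dotProduct_sub, dotProduct_smul, hψ1, smul_eq_mul, mul_one, ← hcdef, sub_self]
      have hww : w ⬝ᵥ w = 1 - c^2 := by
        rw [hwdef]
        simp only [sub_dotProduct, dotProduct_sub, smul_dotProduct, dotProduct_smul, smul_eq_mul,
          dotProduct_comm x ψ, hx1, hψ1, ← hcdef]
        ring
      have hwwnn : 0 ≤ w ⬝ᵥ w := dot_self_nonneg' w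
      have hc2 : c^2 ≤ 1 := by linarith only [hww, hwwnn]
      set u := Real.sqrt (w ⬝ᵥ w) with hudef
      have hu0 : 0 ≤ u := Real.sqrt_nonneg _
      have huu : u^2 = w ⬝ᵥ w := Real.sq_sqrt hwwnn
      have hc2u : c^2 = 1 - u^2 := by rw [huu, hww]; ring
      have hQx : quadForm M x = c^2 * lam + quadForm M w := by
        conv_lhs => rw [hxd]
        rw [quadForm_add_vec hMsymm, quadForm_smul_vec, hQψ]
        have h2 : w ⬝ᵥ (M *ᵥ (c • ψ)) = 0 := by
          rw [Matrix.mulVec_smul, hψeig, dotProduct_smul, dotProduct_smul,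
            dotProduct_comm w ψ, hψw]
          simp
        rw [h2]; ring
      have hQw : (lam + δ) * u^2 ≤ quadForm M w := by
        rcases eq_or_ne (w ⬝ᵥ w) 0 with h0 | h0
        · have hwz : w = 0 := dotProduct_self_eq_zero.mp h0
          have hu' : u = 0 := by rw [hudef, h0, Real.sqrt_zero]
          rw [hu', hwz]
          simp [quadForm]
        · have hwpos : 0 < w ⬝ᵥ w := hwwnn.lt_of_ne (Ne.symm h0)
          have hupos : 0 < u := Real.sqrt_pos.mpr hwpos
          have hmemw : u⁻¹ • w ∈ meanZeroUnit n := by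
            constructor
            · rw [dotProduct_smul, hw0, smul_zero]
            · rw [smul_dotProduct, dotProduct_smul, smul_eq_mul, smul_eq_mul, ← huu]
              field_simp
              try ring
          have hperp : ψ ⬝ᵥ (u⁻¹ • w) = 0 := by rw [dotProduct_smul, hψw, smul_zero]
          have h1 := hgap _ hmemw hperp
          rw [quadForm_smul_vec] at h1
          have h2 := mul_le_mul_of_nonneg_right h1 (sq_nonneg u)
          have e2 : u⁻¹^2 * quadForm M w * u^2 = quadForm M w := by field_simp
          linarith only [h2, e2]
      set B := (A *ᵥ ψ) ⬝ᵥ w with hBdef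
      have hAx : quadForm A x = c^2 * (lam + ε) + 2*(c*B) + quadForm A w := by
        conv_lhs => rw [hxd]
        rw [quadForm_add_vec hAsymm, quadForm_smul_vec, hAψ]
        have h2 : w ⬝ᵥ (A *ᵥ (c • ψ)) = c * B := by
          rw [Matrix.mulVec_smul, dotProduct_smul, smul_eq_mul, hBdef,
            dotProduct_comm w]
        rw [h2]
        try ring
      have hAw : 0 ≤ quadForm A w := by
        rw [hAq]; exact div_nonneg (quadForm_nonneg' (hpsd k) w) (hpos k).le
      have hcB : -(C*u) ≤ c*B := by
        have hB2 : B^2 ≤ C^2 * u^2 := by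
          rw [hC2, huu, hBdef]
          calc ((A *ᵥ ψ) ⬝ᵥ w)^2 = (∑ i, (A *ᵥ ψ) i * w i)^2 := rfl
            _ ≤ (∑ i, (A *ᵥ ψ) i ^2) * (∑ i, w i ^2) :=
                Finset.sum_mul_sq_le_sq_mul_sq _ _ _
            _ = ((A *ᵥ ψ) ⬝ᵥ (A *ᵥ ψ)) * (w ⬝ᵥ w) := by simp [dotProduct, sq]
        have h1 : (c*B)^2 ≤ (C*u)^2 := aux_cs c B C u hB2 hc2
        have h2 : |c*B| ≤ C*u := by
          have h3 := Real.sqrt_le_sqrt h1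
          rwa [Real.sqrt_sq_eq_abs, Real.sqrt_sq (mul_nonneg hC0 hu0)] at h3
        linarith only [neg_abs_le (c*B), h2]
      have hsum : quadForm (Lt L ts) x = (1-s) * quadForm M x + s * quadForm A x := by
        rw [quadForm_Lt, hMdef, quadForm_Lt, hAq]
        have e : ∀ j, ts j * (quadForm (L j) x / lam1 (L j))
            = (1-s) * (tstar j * (quadForm (L j) x / lam1 (L j)))
              + s * (if j = k then quadForm (L j) x / lam1 (L j) else 0) := by
          intro j
          simp only [htsdef]
          split <;> ring
        rw [Finset.sum_congr rfl fun j _ => e j]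
        rw [Finset.sum_add_distrib, ← Finset.mul_sum, ← Finset.mul_sum,
          Finset.sum_ite_eq' univ k (fun j => quadForm (L j) x / lam1 (L j))]
        simp
      have e1 : (1-u^2)*lam + (lam+δ)*u^2 ≤ quadForm M x := by
        rw [hQx, hc2u]; linarith only [hQw]
      have e2 : (1-u^2)*(lam+ε) - 2*(C*u) ≤ quadForm A x := by
        rw [hAx, hc2u]; linarith only [hAw, hcB]
      have e3 := mul_le_mul_of_nonneg_left e1 h1s
      have e4 := mul_le_mul_of_nonneg_left e2 hspos.le
      have e6 : (1-s)*((1-u^2)*lam + (lam+δ)*u^2) + s*((1-u^2)*(lam+ε) - 2*(C*u))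
          = lam + ((1-s)*δ - s*(lam+ε))*u^2 - 2*C*s*u + s*ε := by ring
      have e5 : (δ/4)*u^2 ≤ ((1-s)*δ - s*(lam+ε))*u^2 :=
        mul_le_mul_of_nonneg_right hcoef (sq_nonneg u)
      have e7 := hquad u
      rw [hsum]
      linarith only [e3, e4, e5, e6, e7]
    have hts_lam := hmax ts htsS
    have hlow : lam + s*ε/2 ≤ lam1 (Lt L ts) := by
      rw [lam1]
      have hne' : (quadForm (Lt L ts) '' meanZeroUnit n).Nonempty := ⟨_, ψ, hψX, rfl⟩
      refine le_csInf hne' ?_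
      rintro y ⟨x, hx, rfl⟩
      exact hbound x hx
    linarith only [hts_lam, hlow, mul_pos hspos hεpos]
  -- easy direction and assembly
  have heasy : ∀ x ∈ meanZeroUnit n, lam ≤ maxScore L x := by
    intro x hx
    have h1 : lam ≤ quadForm M x := hlamle x hx
    have h2 : quadForm M x ≤ maxScore L x := by
      rw [hMdef, quadForm_Lt]
      have h3 : ∀ j : Fin m, tstar j * (quadForm (L j) x / lam1 (L j))
          ≤ tstar j * maxScore L x := by
        intro j
        refine mul_le_mul_of_nonneg_left ?_ (hts0 j)
        simp only [maxScore]
        exact Finset.le_sup' (fun k => quadForm (L k) x / lam1 (L k)) (mem_univ j)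
      calc ∑ j, tstar j * (quadForm (L j) x / lam1 (L j))
          ≤ ∑ j, tstar j * maxScore L x := Finset.sum_le_sum fun j _ => h3 j
        _ = maxScore L x := by rw [← Finset.sum_mul, hts1, one_mul]
    linarith only [h1, h2]
  have hmsψ : maxScore L ψ ≤ lam := by
    simp only [maxScore]
    exact Finset.sup'_le _ _ fun k _ => hkey k
  have hne : (maxScore L '' meanZeroUnit n).Nonempty := ⟨_, ψ, hψX, rfl⟩
  have hbddms : BddBelow (maxScore L '' meanZeroUnit n) :=
    ⟨lam, by rintro y ⟨x, hx, rfl⟩; exact heasy x hx⟩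
  have hlaminf : lam ≤ sInf (maxScore L '' meanZeroUnit n) :=
    le_csInf hne (by rintro y ⟨x, hx, rfl⟩; exact heasy x hx)
  have hinfψ : sInf (maxScore L '' meanZeroUnit n) ≤ maxScore L ψ :=
    csInf_le hbddms ⟨ψ, hψX, rfl⟩
  refine ⟨le_antisymm hlaminf (hinfψ.trans hmsψ), le_antisymm (hmsψ.trans hlaminf) hinfψ, ?_⟩
  intro x hx
  calc maxScore L ψ ≤ lam := hmsψ
    _ ≤ maxScore L x := heasy x hx
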